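/- If z₁, z₂ lie in the Carleson square Q(I) with 0 < |I| < 1/2, then the radial projection Π(⟨z₁,z₂⟩) of the hyperbolic geodesic segment joining z₁ and z₂ is contained in I, where Π(z) = z/|z|. -/

import Mathlib

/-!
The geodesic from `z` to `w` is `t ↦ (t s + z) / (1 + z̄ t s)` with `s = (w - z) / (1 - z̄ w)`.
Multiplying by `|1 + z̄ t s|²` and using `s + z = w (1 + z̄ s)` gives
`|1 + z̄ t s|² ξ = t |1 + z̄ s|² w + (1 - t)(1 - t |s|²) z`, so every point `ξ` of the geodesic
is a combination `p z + q w` with `p, q ≥ 0`, `p + q > 0`. Hence the geodesic stays in every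
open or closed half-plane through `0` that contains its endpoints. Since `2πℓ < π`, the sector
over the arc is an intersection of two closed half-planes and lies in an open one; this keeps
`ξ` away from `0` and its argument in the arc.
-/

/-- The hyperbolic geodesic segment joining `z` and `w` in the unit disc: the image of the
Euclidean segment `[0, (w-z)/(1-z̄w)]` under the Möbius map `u ↦ (u+z)/(1+z̄u)`. -/
noncomputable def geoSeg (z w : ℂ) : Set ℂ :=
  (fun t : ℝ =>
    ((t : ℂ) * ((w - z) / (1 - (starRingEnd ℂ) z * w)) + z) /
      (1 + (starRingEnd ℂ) z * ((t : ℂ) * ((w - z) / (1 - (starRingEnd ℂ) z * w))))) ''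
    Set.Icc (0 : ℝ) 1

/-- `box a ℓ h = {re^{iθ} : θ ∈ [a, a + 2πℓ], 1 - h ≤ r < 1}`; the Carleson square over
the arc of normalized length `ℓ` starting at angle `a` is `box a ℓ ℓ`. -/
def box (a ℓ h : ℝ) : Set ℂ :=
  {z | ∃ r θ : ℝ, 1 - h ≤ r ∧ r < 1 ∧ a ≤ θ ∧ θ ≤ a + 2 * Real.pi * ℓ ∧
    z = (r : ℂ) * Complex.exp (θ * Complex.I)}

open Complex ComplexConjugate
open scoped Real

section Geodesic

variable {z w : ℂ}

noncomputable def mobius (z u : ℂ) : ℂ :=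
  (u - z) / (1 - conj z * u)

noncomputable def geoPath (z w : ℂ) (t : ℝ) : ℂ :=
  ((t : ℂ) * mobius z w + z) / (1 + conj z * ((t : ℂ) * mobius z w))

theorem geoSeg_eq_image_geoPath (z w : ℂ) : geoSeg z w = geoPath z w '' Set.Icc 0 1 :=
  rfl

theorem normSq_one_sub_conj_mul_sub_normSq_sub (z w : ℂ) :
    normSq (1 - conj z * w) - normSq (w - z) = (1 - normSq z) * (1 - normSq w) := by
  simp only [normSq_apply, sub_re, sub_im, mul_re, mul_im, one_re, one_im, conj_re, conj_im]
  ring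

theorem norm_conj_mul_lt_one (hz : ‖z‖ < 1) (hw : ‖w‖ ≤ 1) : ‖conj z * w‖ < 1 := by
  rw [norm_mul, norm_conj]
  exact mul_lt_one_of_nonneg_of_lt_one_left (norm_nonneg z) hz hw

theorem one_add_conj_mul_ne_zero (hz : ‖z‖ < 1) (hw : ‖w‖ ≤ 1) : 1 + conj z * w ≠ 0 :=
  slitPlane_ne_zero (mem_slitPlane_of_norm_lt_one (norm_conj_mul_lt_one hz hw))

theorem normSq_lt_one_iff {x : ℂ} : normSq x < 1 ↔ ‖x‖ < 1 := by
  simpa only [not_le] using one_le_normSq_iff.not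

theorem norm_mobius_lt_one (hz : ‖z‖ < 1) (hw : ‖w‖ < 1) : ‖mobius z w‖ < 1 := by
  have hlt : normSq (w - z) < normSq (1 - conj z * w) := by
    have := normSq_lt_one_iff.mpr hz
    have := normSq_lt_one_iff.mpr hw
    nlinarith [normSq_one_sub_conj_mul_sub_normSq_sub z w]
  rw [← normSq_lt_one_iff, mobius, normSq_div, div_lt_one ((normSq_nonneg _).trans_lt hlt)]
  exact hlt

theorem normSq_mul_geoPath (hzw : conj z * w ≠ 1) (t : ℝ)
    (hD : 1 + conj z * ((t : ℂ) * mobius z w) ≠ 0) :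
    (normSq (1 + conj z * ((t : ℂ) * mobius z w)) : ℂ) * geoPath z w t =
      ((t * normSq (1 + conj z * mobius z w) : ℝ) : ℂ) * w +
        (((1 - t) * (1 - t * normSq (mobius z w)) : ℝ) : ℂ) * z := by
  rw [geoPath, ← mul_conj, mul_comm, ← mul_assoc, div_mul_cancel₀ _ hD]
  have hs : mobius z w * (1 - conj z * w) = w - z :=
    div_mul_cancel₀ _ (sub_ne_zero.mpr hzw.symm)
  set s := mobius z w
  push_cast
  simp only [← mul_conj, map_add, map_mul, map_one, conj_ofReal, conj_conj]
  linear_combination (t : ℂ) * (1 + z * conj s) * hs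

theorem exists_geoPath_eq (hz : ‖z‖ < 1) (hw : ‖w‖ < 1) {t : ℝ} (ht₀ : 0 ≤ t) (ht₁ : t ≤ 1) :
    ∃ p q : ℝ, 0 ≤ p ∧ 0 ≤ q ∧ 0 < p + q ∧ geoPath z w t = p * z + q * w := by
  have hzw : conj z * w ≠ 1 := fun h => by simpa [h] using norm_conj_mul_lt_one hz hw.le
  have hs : ‖mobius z w‖ < 1 := norm_mobius_lt_one hz hw
  have hts : ‖(t : ℂ) * mobius z w‖ ≤ 1 := by
    rw [norm_mul, norm_real, Real.norm_of_nonneg ht₀]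
    exact mul_le_one₀ ht₁ (norm_nonneg _) hs.le
  have hD := one_add_conj_mul_ne_zero hz hts
  have hN := normSq_pos.mpr hD
  have hK := normSq_pos.mpr (one_add_conj_mul_ne_zero hz hs.le)
  have hσ : normSq (mobius z w) < 1 := normSq_lt_one_iff.mpr hs
  have hmain := normSq_mul_geoPath hzw t hD
  set N := normSq (1 + conj z * ((t : ℂ) * mobius z w))
  refine ⟨(1 - t) * (1 - t * normSq (mobius z w)) / N, t * normSq (1 + conj z * mobius z w) / N,
    ?_, by positivity, ?_, ?_⟩
  · exact div_nonneg (mul_nonneg (by linarith) (by nlinarith)) hN.le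
  · rw [← add_div]
    refine div_pos ?_ hN
    rcases ht₁.lt_or_eq with ht | rfl
    · exact add_pos_of_pos_of_nonneg (mul_pos (by linarith) (by nlinarith)) (by positivity)
    · linarith
  · have hN' : (N : ℂ) ≠ 0 := ofReal_ne_zero.mpr hN.ne'
    apply mul_left_cancel₀ hN'
    rw [hmain]
    push_cast
    field_simp
    ring

theorem im_ofReal_mul_add_ofReal_mul_mul (p q : ℝ) (z w e : ℂ) :
    ((p * z + q * w) * e).im = p * (z * e).im + q * (w * e).im := by
  simp only [add_mul, mul_assoc, add_im, im_ofReal_mul]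

theorem im_geoPath_mul_nonneg (hz : ‖z‖ < 1) (hw : ‖w‖ < 1) {t : ℝ} (ht₀ : 0 ≤ t) (ht₁ : t ≤ 1)
    {e : ℂ} (hze : 0 ≤ (z * e).im) (hwe : 0 ≤ (w * e).im) : 0 ≤ (geoPath z w t * e).im := by
  obtain ⟨p, q, hp, hq, -, hpq⟩ := exists_geoPath_eq hz hw ht₀ ht₁
  rw [hpq, im_ofReal_mul_add_ofReal_mul_mul]
  positivity

theorem im_geoPath_mul_pos (hz : ‖z‖ < 1) (hw : ‖w‖ < 1) {t : ℝ} (ht₀ : 0 ≤ t) (ht₁ : t ≤ 1)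
    {e : ℂ} (hze : 0 < (z * e).im) (hwe : 0 < (w * e).im) : 0 < (geoPath z w t * e).im := by
  obtain ⟨p, q, hp, hq, hpq, hgeo⟩ := exists_geoPath_eq hz hw ht₀ ht₁
  rw [hgeo, im_ofReal_mul_add_ofReal_mul_mul]
  rcases hp.lt_or_eq with hp | rfl
  · positivity
  · have : 0 < q := by linarith
    positivity

end Geodesic

section Sector

theorem im_ofReal_mul_exp_mul_exp (r θ φ : ℝ) :
    ((r : ℂ) * exp (θ * I) * exp (φ * I)).im = r * Real.sin (θ + φ) := by
  rw [mul_assoc, ← exp_add, ← add_mul, ← ofReal_add, im_ofReal_mul, exp_ofReal_mul_I_im]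

variable {r θ a β : ℝ}

-- `0 ≤ (ξ * exp (φ * I)).im` says that `ξ` lies in the closed half-plane of arguments in
-- `[-φ, π - φ]`: the sector is cut out by two of them and lies in the open one around its bisector.
theorem im_mul_exp_of_mem_sector (hr : 0 < r) (hθa : a ≤ θ) (hθb : θ ≤ a + β) (hβ : β < π) :
    0 ≤ ((r : ℂ) * exp (θ * I) * exp (↑(-a) * I)).im ∧
      0 ≤ ((r : ℂ) * exp (θ * I) * exp (↑(π - (a + β)) * I)).im ∧
      0 < ((r : ℂ) * exp (θ * I) * exp (↑(π / 2 - (a + β / 2)) * I)).im := by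
  simp only [im_ofReal_mul_exp_mul_exp]
  refine ⟨mul_nonneg hr.le (Real.sin_nonneg_of_nonneg_of_le_pi ?_ ?_),
    mul_nonneg hr.le ?_, mul_pos hr (Real.sin_pos_of_pos_of_lt_pi ?_ ?_)⟩
  · linarith
  · linarith
  · rw [show θ + (π - (a + β)) = π - (a + β - θ) by ring, Real.sin_pi_sub]
    exact Real.sin_nonneg_of_nonneg_of_le_pi (by linarith) (by linarith)
  · linarith
  · linarith

theorem exists_angle_of_im_mul_exp_nonneg {ξ : ℂ} (hξ : ξ ≠ 0) (hβ : 0 < β)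
    (ha : 0 ≤ (ξ * exp (↑(-a) * I)).im) (hb : 0 ≤ (ξ * exp (↑(π - (a + β)) * I)).im) :
    ∃ θ, a ≤ θ ∧ θ ≤ a + β ∧ ξ / ‖ξ‖ = exp (θ * I) := by
  set φ := arg (ξ * exp (↑(-a) * I))
  have hpolar : (‖ξ‖ : ℂ) * exp (φ * I) = ξ * exp (↑(-a) * I) := by
    have := norm_mul_exp_arg_mul_I (ξ * exp (↑(-a) * I))
    rwa [norm_mul, norm_exp_ofReal_mul_I, mul_one] at this
  have hξφ : ξ = ‖ξ‖ * exp (↑(a + φ) * I) := by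
    rw [ofReal_add, add_mul, add_comm, exp_add, ← mul_assoc, hpolar, mul_assoc, ← exp_add,
      ← add_mul, ← ofReal_add, neg_add_cancel, ofReal_zero, zero_mul, exp_zero, mul_one]
  have hφ₀ : 0 ≤ φ := arg_nonneg_iff.mpr ha
  have hφβ : φ ≤ β := by
    by_contra! hβφ
    rw [hξφ, im_ofReal_mul_exp_mul_exp,
      show a + φ + (π - (a + β)) = π - (β - φ) by ring, Real.sin_pi_sub] at hb
    have := Real.sin_neg_of_neg_of_neg_pi_lt (x := β - φ) (by linarith)
      (by linarith [arg_le_pi (ξ * exp (↑(-a) * I))])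
    nlinarith [norm_pos_iff.mpr hξ]
  refine ⟨a + φ, by linarith, by linarith, ?_⟩
  rw [div_eq_iff (ofReal_ne_zero.mpr (norm_ne_zero_iff.mpr hξ)), mul_comm]
  exact hξφ

end Sector

section Box

variable {a ℓ h : ℝ} {z : ℂ}

theorem norm_lt_one_of_mem_box (hh : h ≤ 1) (hz : z ∈ box a ℓ h) : ‖z‖ < 1 := by
  obtain ⟨r, θ, hr, hr₁, -, -, rfl⟩ := hz
  rwa [norm_mul, norm_exp_ofReal_mul_I, mul_one, norm_real, Real.norm_of_nonneg (by linarith)]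

theorem im_mul_exp_of_mem_box (hh : h < 1) (hℓ : 2 * π * ℓ < π) (hz : z ∈ box a ℓ h) :
    0 ≤ (z * exp (↑(-a) * I)).im ∧ 0 ≤ (z * exp (↑(π - (a + 2 * π * ℓ)) * I)).im ∧
      0 < (z * exp (↑(π / 2 - (a + 2 * π * ℓ / 2)) * I)).im := by
  obtain ⟨r, θ, hr, -, hθa, hθb, rfl⟩ := hz
  exact im_mul_exp_of_mem_sector (by linarith) hθa hθb hℓ

end Box

theorem radial_projection_geoSeg_subset_arc (a ℓ : ℝ) (hℓ : 0 < ℓ) (hℓ2 : ℓ < 1 / 2)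
    (z₁ z₂ : ℂ) (h₁ : z₁ ∈ box a ℓ ℓ) (h₂ : z₂ ∈ box a ℓ ℓ) :
    ∀ ξ ∈ geoSeg z₁ z₂, ξ ≠ 0 ∧ ∃ θ : ℝ, a ≤ θ ∧ θ ≤ a + 2 * Real.pi * ℓ ∧
      ξ / (‖ξ‖ : ℂ) = Complex.exp (θ * Complex.I) := by
  have hβ : 2 * π * ℓ < π := by nlinarith [Real.pi_pos]
  have hz₁ := norm_lt_one_of_mem_box (by linarith) h₁
  have hz₂ := norm_lt_one_of_mem_box (by linarith) h₂
  obtain ⟨ha₁, hb₁, hc₁⟩ := im_mul_exp_of_mem_box (by linarith) hβ h₁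
  obtain ⟨ha₂, hb₂, hc₂⟩ := im_mul_exp_of_mem_box (by linarith) hβ h₂
  rw [geoSeg_eq_image_geoPath]
  rintro _ ⟨t, ⟨ht₀, ht₁⟩, rfl⟩
  have hξ : geoPath z₁ z₂ t ≠ 0 := by
    have := im_geoPath_mul_pos hz₁ hz₂ ht₀ ht₁ hc₁ hc₂
    rintro h
    simp [h] at this
  exact ⟨hξ, exists_angle_of_im_mul_exp_nonneg hξ (by positivity)
    (im_geoPath_mul_nonneg hz₁ hz₂ ht₀ ht₁ ha₁ ha₂) (im_geoPath_mul_nonneg hz₁ hz₂ ht₀ ht₁ hb₁ hb₂)⟩
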